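/- Let q ≥ 2 be a prime power. Then lim_{m→∞} binom(2m+1, m)_q / S(2m+1) = 1 / ( q^{1/4} · θ₂(q^{−1}) ). -/

import Mathlib

open Filter Matrix
open scoped Topology

/-- The `q`-binomial coefficient `binom(n,k)_q = ∏_{j=0}^{k-1} (q^{n-j}-1)/(q^{k-j}-1)`. -/
noncomputable def qBinom (q n k : ℕ) : ℝ :=
  ∏ j ∈ Finset.range k, ((q : ℝ) ^ (n - j) - 1) / ((q : ℝ) ^ (k - j) - 1)

/-- `S(n) = ∑_{k=0}^n binom(n,k)_q`. -/
noncomputable def Sq (q n : ℕ) : ℝ := ∑ k ∈ Finset.range (n + 1), qBinom q n k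

/-- `K_q = ∏_{j=1}^∞ (1 - q^{-j})`. -/
noncomputable def Kq (q : ℕ) : ℝ := ∏' j : ℕ, (1 - ((q : ℝ))⁻¹ ^ (j + 1))

/-- `K_q(k) = ∏_{j=1}^{k} (1 - q^{-j})`. -/
noncomputable def KqTrunc (q k : ℕ) : ℝ := ∏ j ∈ Finset.range k, (1 - ((q : ℝ))⁻¹ ^ (j + 1))

/-- Jacobi theta constant `θ₂(w) = ∑_{k∈ℤ} w^{(k+1/2)²}`. -/
noncomputable def theta2 (w : ℝ) : ℝ := ∑' k : ℤ, w ^ (((k : ℝ) + 1/2) ^ 2)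

/-- Jacobi theta constant `θ₃(w) = ∑_{k∈ℤ} w^{k²}`. -/
noncomputable def theta3 (w : ℝ) : ℝ := ∑' k : ℤ, w ^ ((k : ℝ) ^ 2)

/-- Condition (⋆): `n²/4 − ε·n + A·√n − k(n)(n−k(n)) → −∞`. -/
def StarCond (A ε : ℝ) (k : ℕ → ℕ) : Prop :=
  Tendsto (fun n : ℕ =>
    (n : ℝ) ^ 2 / 4 - ε * n + A * Real.sqrt n - (k n : ℝ) * ((n : ℝ) - (k n : ℝ)))
    atTop atBot

/-- The set of permutation matrices inside `GL n F`. -/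
def permSet (F : Type) [Field F] (n : ℕ) : Set (GL (Fin n) F) :=
  {M | ∃ σ : Equiv.Perm (Fin n), (M : Matrix (Fin n) (Fin n) F) = σ.permMatrix F}

/-- The set of invertible diagonal matrices inside `GL n F`. -/
def diagSet (F : Type) [Field F] (n : ℕ) : Set (GL (Fin n) F) :=
  {M | ∃ d : Fin n → F, (M : Matrix (Fin n) (Fin n) F) = Matrix.diagonal d}

/-- The permutation group: subgroup of `GL n F` formed by the permutation matrices. -/
def PermGroup (F : Type) [Field F] (n : ℕ) : Subgroup (GL (Fin n) F) :=
  Subgroup.closure (permSet F n)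

/-- The monomial group: subgroup of `GL n F` generated by permutation and diagonal matrices. -/
def MonomialGroup (F : Type) [Field F] (n : ℕ) : Subgroup (GL (Fin n) F) :=
  Subgroup.closure (permSet F n ∪ diagSet F n)

/-- Number of orbits of a subgroup `G ≤ GL n F` acting on the Grassmannian of
`k`-dimensional subspaces of `F^n` (by taking images of subspaces). -/
noncomputable def numClassesDim {n : ℕ} (F : Type) [Field F]
    (G : Subgroup (GL (Fin n) F)) (k : ℕ) : ℕ :=
  Nat.card (Quot (fun V W : {V : Submodule F (Fin n → F) // Module.finrank F V = k} =>
    ∃ M ∈ G, Submodule.map (Matrix.toLin' (M : Matrix (Fin n) (Fin n) F)) V.1 = W.1))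

/-- Number of orbits of a subgroup `G ≤ GL n F` acting on the set of all subspaces of `F^n`. -/
noncomputable def numClasses {n : ℕ} (F : Type) [Field F]
    (G : Subgroup (GL (Fin n) F)) : ℕ :=
  Nat.card (Quot (fun V W : Submodule F (Fin n → F) =>
    ∃ M ∈ G, Submodule.map (Matrix.toLin' (M : Matrix (Fin n) (Fin n) F)) V = W))

/-- Semilinear orbit relation: `W` is the image of `V` under the semilinear transformation
given by applying the field automorphism `σ` componentwise followed by a monomial matrix. -/
def semiRel (F : Type) [Field F] (n : ℕ) (V W : Submodule F (Fin n → F)) : Prop :=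
  ∃ σ : F ≃+* F, ∃ M ∈ MonomialGroup F n,
    (W : Set (Fin n → F)) =
      (fun x => Matrix.mulVec (M : Matrix (Fin n) (Fin n) F) (fun i => σ (x i))) '' (V : Set (Fin n → F))

/-- Number of semilinear equivalence classes of `k`-dimensional subspaces of `F^n`. -/
noncomputable def numClassesDimSemi (F : Type) [Field F] (n k : ℕ) : ℕ :=
  Nat.card (Quot (fun V W : {V : Submodule F (Fin n → F) // Module.finrank F V = k} =>
    semiRel F n V.1 W.1))

/-- Number of semilinear equivalence classes of subspaces of `F^n`. -/
noncomputable def numClassesSemi (F : Type) [Field F] (n : ℕ) : ℕ :=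
  Nat.card (Quot (fun V W : Submodule F (Fin n → F) => semiRel F n V W))


/-! With `K(n) = ∏_{j=1}^n (1 - q^{-j})` one has `binom(a+b, a)_q = q^{ab} K(a+b) / (K(a) K(b))`.
Putting `a = m+s`, `b = m+1-s`, the ratio `binom(2m+1, m+s)_q / binom(2m+1, m)_q` becomes
`q^{-(s²-s)} K(m) K(m+1) / (K(m+s) K(m+1-s))`, which tends to `q^{-(s²-s)}` as `m → ∞` and is
bounded by `q^{-(s²-s)} / K(∞)²`, where `K(∞) > 0` since `∑ q^{-j}` converges. Dominated
convergence gives `S(2m+1) / binom(2m+1, m)_q → ∑_{s∈ℤ} q^{-(s²-s)} = q^{1/4} θ₂(q^{-1})`. -/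

open Finset

section EulerProduct

variable {r : ℝ} (hr₀ : 0 ≤ r) (hr₁ : r < 1)
include hr₀ hr₁

lemma one_sub_pow_succ_pos (j : ℕ) : 0 < 1 - r ^ (j + 1) :=
  sub_pos.mpr (pow_lt_one₀ hr₀ hr₁ j.succ_ne_zero)

lemma summable_log_one_sub_pow_succ : Summable fun j : ℕ ↦ Real.log (1 - r ^ (j + 1)) := by
  simpa only [sub_eq_add_neg] using Real.summable_log_one_add_of_summable
    ((summable_nat_add_iff 1).mpr (summable_geometric_of_lt_one hr₀ hr₁)).neg

lemma tprod_one_sub_pow_succ_pos : 0 < ∏' j : ℕ, (1 - r ^ (j + 1)) := by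
  rw [← Real.rexp_tsum_eq_tprod (one_sub_pow_succ_pos hr₀ hr₁)
    (summable_log_one_sub_pow_succ hr₀ hr₁)]
  exact Real.exp_pos _

lemma tendsto_prod_range_one_sub_pow_succ :
    Tendsto (fun k ↦ ∏ j ∈ range k, (1 - r ^ (j + 1))) atTop
      (𝓝 (∏' j : ℕ, (1 - r ^ (j + 1)))) :=
  (Real.multipliable_of_summable_log (one_sub_pow_succ_pos hr₀ hr₁)
    (summable_log_one_sub_pow_succ hr₀ hr₁)).hasProd.tendsto_prod_nat

lemma prod_range_one_sub_pow_succ_pos (k : ℕ) : 0 < ∏ j ∈ range k, (1 - r ^ (j + 1)) :=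
  prod_pos fun j _ ↦ one_sub_pow_succ_pos hr₀ hr₁ j

lemma prod_range_one_sub_pow_succ_le_one (k : ℕ) : ∏ j ∈ range k, (1 - r ^ (j + 1)) ≤ 1 :=
  prod_le_one (fun j _ ↦ (one_sub_pow_succ_pos hr₀ hr₁ j).le)
    fun _ _ ↦ sub_le_self _ (pow_nonneg hr₀ _)

lemma antitone_prod_range_one_sub_pow_succ :
    Antitone fun k ↦ ∏ j ∈ range k, (1 - r ^ (j + 1)) :=
  antitone_nat_of_succ_le fun k ↦ by
    rw [prod_range_succ]
    exact mul_le_of_le_one_right (prod_range_one_sub_pow_succ_pos hr₀ hr₁ k).le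
      (sub_le_self _ (pow_nonneg hr₀ _))

lemma tprod_one_sub_pow_succ_le_prod_range (k : ℕ) :
    ∏' j : ℕ, (1 - r ^ (j + 1)) ≤ ∏ j ∈ range k, (1 - r ^ (j + 1)) :=
  (antitone_prod_range_one_sub_pow_succ hr₀ hr₁).le_of_tendsto
    (tendsto_prod_range_one_sub_pow_succ hr₀ hr₁) k

end EulerProduct

section ThetaWeight

noncomputable def thetaWeight (r : ℝ) (s : ℤ) : ℝ := r ^ (s ^ 2 - s)

variable {r : ℝ}

lemma thetaWeight_pos (hr : 0 < r) (s : ℤ) : 0 < thetaWeight r s := zpow_pos hr _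

lemma summable_thetaWeight (hr₀ : 0 < r) (hr₁ : r < 1) : Summable (thetaWeight r) := by
  have hgeom : Summable fun s : ℤ ↦ r ^ s.natAbs := by
    have := summable_geometric_of_lt_one hr₀.le hr₁
    exact summable_int_iff_summable_nat_and_neg.mpr ⟨by simpa using this, by simpa using this⟩
  refine (hgeom.div_const r).of_nonneg_of_le (fun s ↦ (thetaWeight_pos hr₀ s).le) fun s ↦ ?_
  have hexp : (s.natAbs : ℤ) - 1 ≤ s ^ 2 - s := by
    rw [Int.natCast_natAbs]; cases abs_cases s <;> nlinarith
  calc thetaWeight r s ≤ r ^ ((s.natAbs : ℤ) - 1) :=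
        zpow_le_zpow_right_of_le_one₀ hr₀ hr₁.le hexp
    _ = r ^ s.natAbs / r := by rw [zpow_sub_one₀ hr₀.ne', zpow_natCast, div_eq_mul_inv]

lemma one_le_tsum_thetaWeight (hr₀ : 0 < r) (hr₁ : r < 1) : 1 ≤ ∑' s, thetaWeight r s := by
  simpa [thetaWeight] using (summable_thetaWeight hr₀ hr₁).le_tsum 0
    fun s _ ↦ (thetaWeight_pos hr₀ s).le

lemma theta2_eq_rpow_mul_tsum_thetaWeight (hr : 0 < r) :
    theta2 r = r ^ (1 / 4 : ℝ) * ∑' s, thetaWeight r s := by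
  have hterm (k : ℤ) :
      r ^ (((k : ℝ) + 1 / 2) ^ 2) = r ^ (1 / 4 : ℝ) * thetaWeight r (k + 1) := by
    rw [thetaWeight, ← Real.rpow_intCast, ← Real.rpow_add hr]
    congr 1
    push_cast
    ring
  rw [theta2, tsum_congr hterm, tsum_mul_left]
  exact congrArg _ ((Equiv.addRight 1).tsum_eq _)

end ThetaWeight

lemma sub_one_div_sub_one_mul_one_sub_inv_pow {K : Type*} [Field K] {x : K} (hx : x ≠ 0)
    {n : ℕ} (hn : x ^ n ≠ 1) (d : ℕ) :
    (x ^ (d + n) - 1) / (x ^ n - 1) * (1 - x⁻¹ ^ n) = x ^ d * (1 - x⁻¹ ^ (d + n)) := by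
  have : x ^ n - 1 ≠ 0 := sub_ne_zero.mpr hn
  rw [inv_pow, inv_pow]
  field_simp
  ring

section QBinomial

lemma qBinom_add_eq_prod_range (q k d : ℕ) :
    qBinom q (k + d) k =
      ∏ i ∈ range k, ((q : ℝ) ^ (d + (i + 1)) - 1) / ((q : ℝ) ^ (i + 1) - 1) := by
  rw [qBinom, ← prod_range_reflect]
  refine prod_congr rfl fun i hi ↦ ?_
  have hi : i < k := mem_range.mp hi
  rw [show k + d - (k - 1 - i) = d + (i + 1) by omega, show k - (k - 1 - i) = i + 1 by omega]

lemma KqTrunc_add (q d k : ℕ) :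
    KqTrunc q (d + k) = KqTrunc q d * ∏ i ∈ range k, (1 - (q : ℝ)⁻¹ ^ (d + (i + 1))) :=
  prod_range_add _ d k

variable {q : ℕ} (hq : 1 < q)
include hq

lemma inv_natCast_lt_one : (q : ℝ)⁻¹ < 1 := inv_lt_one_of_one_lt₀ (by exact_mod_cast hq)

lemma KqTrunc_pos (k : ℕ) : 0 < KqTrunc q k :=
  prod_range_one_sub_pow_succ_pos (by positivity) (inv_natCast_lt_one hq) k

lemma KqTrunc_le_one (k : ℕ) : KqTrunc q k ≤ 1 :=
  prod_range_one_sub_pow_succ_le_one (by positivity) (inv_natCast_lt_one hq) k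

lemma Kq_pos : 0 < Kq q :=
  tprod_one_sub_pow_succ_pos (by positivity) (inv_natCast_lt_one hq)

lemma Kq_le_KqTrunc (k : ℕ) : Kq q ≤ KqTrunc q k :=
  tprod_one_sub_pow_succ_le_prod_range (by positivity) (inv_natCast_lt_one hq) k

lemma tendsto_KqTrunc : Tendsto (KqTrunc q) atTop (𝓝 (Kq q)) :=
  tendsto_prod_range_one_sub_pow_succ (by positivity) (inv_natCast_lt_one hq)

lemma qBinom_add_mul_KqTrunc_mul_KqTrunc (k d : ℕ) :
    qBinom q (k + d) k * (KqTrunc q k * KqTrunc q d) =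
      (q : ℝ) ^ (k * d) * KqTrunc q (k + d) := by
  have hterm : ∀ i ∈ range k,
      ((q : ℝ) ^ (d + (i + 1)) - 1) / ((q : ℝ) ^ (i + 1) - 1) * (1 - (q : ℝ)⁻¹ ^ (i + 1)) =
        (q : ℝ) ^ d * (1 - (q : ℝ)⁻¹ ^ (d + (i + 1))) := fun i _ ↦
    sub_one_div_sub_one_mul_one_sub_inv_pow (by positivity)
      (one_lt_pow₀ (by exact_mod_cast hq) i.succ_ne_zero).ne' d
  calc qBinom q (k + d) k * (KqTrunc q k * KqTrunc q d)
      = (∏ i ∈ range k, ((q : ℝ) ^ (d + (i + 1)) - 1) / ((q : ℝ) ^ (i + 1) - 1) *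
          (1 - (q : ℝ)⁻¹ ^ (i + 1))) * KqTrunc q d := by
        rw [qBinom_add_eq_prod_range, prod_mul_distrib, KqTrunc, mul_assoc]
    _ = (q : ℝ) ^ (k * d) * KqTrunc q (k + d) := by
        rw [prod_congr rfl hterm, prod_mul_distrib, prod_const, card_range, ← pow_mul,
          add_comm k d, KqTrunc_add, mul_comm d k]
        ring

lemma qBinom_add_eq (k d : ℕ) :
    qBinom q (k + d) k =
      (q : ℝ) ^ (k * d) * KqTrunc q (k + d) / (KqTrunc q k * KqTrunc q d) :=
  eq_div_of_mul_eq (mul_pos (KqTrunc_pos hq k) (KqTrunc_pos hq d)).ne'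
    (qBinom_add_mul_KqTrunc_mul_KqTrunc hq k d)

end QBinomial

section CentralRatio

noncomputable def centralRatio (q m : ℕ) (s : ℤ) : ℝ :=
  if s ∈ Icc (-(m : ℤ)) (m + 1) then
    qBinom q (2 * m + 1) (s + m).toNat / qBinom q (2 * m + 1) m
  else 0

lemma tsum_centralRatio (q m : ℕ) :
    ∑' s, centralRatio q m s = Sq q (2 * m + 1) / qBinom q (2 * m + 1) m := by
  rw [tsum_eq_sum (s := Icc (-(m : ℤ)) (m + 1)) fun s hs ↦ by rw [centralRatio, if_neg hs], Sq,
    sum_div]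
  refine sum_nbij' (fun s ↦ (s + m).toNat) (fun k ↦ (k : ℤ) - m) ?_ ?_ ?_ ?_
    fun s hs ↦ if_pos hs
  all_goals
    intro x hx
    simp only [mem_Icc, mem_range] at hx ⊢
    omega

variable {q : ℕ} (hq : 1 < q)
include hq

lemma centralRatio_eq {m : ℕ} {s : ℤ} (hs : s ∈ Icc (-(m : ℤ)) (m + 1)) :
    centralRatio q m s = thetaWeight (q : ℝ)⁻¹ s *
      (KqTrunc q m * KqTrunc q (m + 1) /
        (KqTrunc q (s + m).toNat * KqTrunc q (1 - s + m).toNat)) := by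
  obtain ⟨hs₁, hs₂⟩ := mem_Icc.mp hs
  obtain ⟨a, ha⟩ : ∃ a : ℕ, (a : ℤ) = s + m := ⟨(s + m).toNat, by omega⟩
  obtain ⟨b, hb⟩ : ∃ b : ℕ, (b : ℤ) = 1 - s + m := ⟨(1 - s + m).toNat, by omega⟩
  -- `(m + s) (m + 1 - s) = m (m + 1) - (s² - s)`
  have hweight :
      (q : ℝ) ^ (a * b) = thetaWeight (q : ℝ)⁻¹ s * (q : ℝ) ^ (m * (m + 1)) := by
    rw [thetaWeight, _root_.inv_zpow', ← zpow_natCast, ← zpow_natCast,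
      ← zpow_add₀ (by positivity)]
    congr 1
    push_cast [ha, hb]
    ring
  rw [centralRatio, if_pos hs, show (s + m).toNat = a by omega,
    show (1 - s + m).toNat = b by omega, show 2 * m + 1 = a + b by omega, qBinom_add_eq hq,
    show a + b = m + (m + 1) by omega, qBinom_add_eq hq, hweight]
  have := (KqTrunc_pos hq (m + (m + 1))).ne'
  field_simp

lemma norm_centralRatio_le (m : ℕ) (s : ℤ) :
    ‖centralRatio q m s‖ ≤ thetaWeight (q : ℝ)⁻¹ s / (Kq q * Kq q) := by
  have hw := thetaWeight_pos (inv_pos.mpr (by positivity : (0 : ℝ) < q)) s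
  have hK := Kq_pos hq
  have hpos := KqTrunc_pos hq
  by_cases hs : s ∈ Icc (-(m : ℤ)) (m + 1)
  · have hden : Kq q * Kq q ≤ KqTrunc q (s + m).toNat * KqTrunc q (1 - s + m).toNat :=
      mul_le_mul (Kq_le_KqTrunc hq _) (Kq_le_KqTrunc hq _) hK.le (hpos _).le
    have hnum : KqTrunc q m * KqTrunc q (m + 1) ≤ 1 :=
      mul_le_one₀ (KqTrunc_le_one hq m) (hpos _).le (KqTrunc_le_one hq _)
    rw [centralRatio_eq hq hs, Real.norm_of_nonneg (mul_nonneg hw.le (div_nonneg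
      (mul_pos (hpos _) (hpos _)).le (mul_pos (hpos _) (hpos _)).le)),
      div_eq_mul_one_div (thetaWeight _ s)]
    exact mul_le_mul_of_nonneg_left (div_le_div₀ zero_le_one hnum (mul_pos hK hK) hden) hw.le
  · rw [centralRatio, if_neg hs, norm_zero]
    positivity

lemma tendsto_centralRatio (s : ℤ) :
    Tendsto (fun m ↦ centralRatio q m s) atTop (𝓝 (thetaWeight (q : ℝ)⁻¹ s)) := by
  have hK (c : ℤ) : Tendsto (fun m : ℕ ↦ KqTrunc q (c + m).toNat) atTop (𝓝 (Kq q)) :=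
    (tendsto_KqTrunc hq).comp <|
      tendsto_atTop_atTop.mpr fun n ↦ ⟨n + c.natAbs, fun m hm ↦ by omega⟩
  have hne : Kq q * Kq q ≠ 0 := (mul_pos (Kq_pos hq) (Kq_pos hq)).ne'
  have hlim := tendsto_const_nhds (x := thetaWeight (q : ℝ)⁻¹ s) |>.mul <|
    ((tendsto_KqTrunc hq).mul ((tendsto_KqTrunc hq).comp (tendsto_add_atTop_nat 1))).div
      ((hK s).mul (hK (1 - s))) hne
  rw [div_self hne, mul_one] at hlim
  refine hlim.congr' ?_
  filter_upwards [eventually_ge_atTop s.natAbs] with m hm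
  rw [centralRatio_eq hq (mem_Icc.mpr ⟨by omega, by omega⟩)]
  rfl

end CentralRatio

lemma tendsto_Sq_div_qBinom {q : ℕ} (hq : 1 < q) :
    Tendsto (fun m : ℕ ↦ Sq q (2 * m + 1) / qBinom q (2 * m + 1) m) atTop
      (𝓝 (∑' s, thetaWeight (q : ℝ)⁻¹ s)) := by
  simp_rw [← tsum_centralRatio]
  exact tendsto_tsum_of_dominated_convergence
    ((summable_thetaWeight (by positivity) (inv_natCast_lt_one hq)).div_const _)
    (tendsto_centralRatio hq) (Eventually.of_forall (norm_centralRatio_le hq))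

theorem stmt13 (q : ℕ) (hq : IsPrimePow q) :
    Tendsto (fun m : ℕ => qBinom q (2 * m + 1) m / Sq q (2 * m + 1))
      atTop (𝓝 (1 / ((q : ℝ) ^ ((1 : ℝ) / 4) * theta2 ((q : ℝ))⁻¹))) := by
  have hq₁ : 1 < q := hq.one_lt
  have hq₀ : (0 : ℝ) < q := by positivity
  have hconst : (q : ℝ) ^ ((1 : ℝ) / 4) * theta2 (q : ℝ)⁻¹ = ∑' s, thetaWeight (q : ℝ)⁻¹ s := by
    rw [theta2_eq_rpow_mul_tsum_thetaWeight (inv_pos.mpr hq₀), ← mul_assoc,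
      ← Real.mul_rpow hq₀.le (inv_pos.mpr hq₀).le, mul_inv_cancel₀ hq₀.ne', Real.one_rpow,
      one_mul]
  have hpos : 0 < ∑' s, thetaWeight (q : ℝ)⁻¹ s :=
    one_pos.trans_le (one_le_tsum_thetaWeight (inv_pos.mpr hq₀) (inv_natCast_lt_one hq₁))
  rw [hconst, one_div]
  simpa only [inv_div] using (tendsto_Sq_div_qBinom hq₁).inv₀ hpos.ne'
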